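/- Let G be a compact Hausdorff topological group with normalized Haar probability measure μ, π an irreducible representation of G on a complex inner product space V with character χ_π, and T: V → V an arbitrary linear map. Then for all A, B ∈ G: ∫_G tr(π(A·g·B·g⁻¹) ∘ T) dμ(g) = (1/dim π)·χ_π(B)·tr(π(A) ∘ T). In particular, for a twining character χ_π^ω(g) = tr(π(g) ∘ T) one has ∫_G χ_π^ω(A·g·B·g⁻¹) dμ(g) = (1/dim π)·χ_π(B)·χ_π^ω(A) (the fusion relation for twining characters). -/

import Mathlib

/-!
Averaging the conjugates `π g * π B * (π g)⁻¹` over the Haar measure gives an operator `M` that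
commutes with every `π h` (left invariance of `μ`) and has the trace of `π B` (conjugation
invariance of the trace, and `μ` has mass one). By Schur's lemma `M = (χ_π(B) / dim π) • 1`. The
integrand is `tr (π A ∘ (π g * π B * (π g)⁻¹) ∘ T)`, a linear functional of the conjugate, so the
integral passes inside and equals `tr (π A ∘ M ∘ T)`.
-/

open MeasureTheory

/-- `π` is a continuous unitary representation. -/
def IsContUnitaryRep {G V : Type*} [Group G] [TopologicalSpace G]
    [NormedAddCommGroup V] [InnerProductSpace ℂ V]
    (π : G →* (V →ₗ[ℂ] V)) : Prop :=
  (Continuous fun p : G × V => π p.1 p.2) ∧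
    ∀ g : G, ∀ v w : V, @inner ℂ V _ (π g v) (π g w) = @inner ℂ V _ v w

/-- `π` admits no proper nonzero invariant subspace. -/
def IsIrreducibleRep {G V : Type*} [Group G]
    [AddCommGroup V] [Module ℂ V]
    (π : G →* (V →ₗ[ℂ] V)) : Prop :=
  ∀ W : Submodule ℂ V, (∀ g : G, W.map (π g) ≤ W) → W = ⊥ ∨ W = ⊤

theorem continuous_toContinuousLinearMap_of_continuous_uncurry
    {𝕜 : Type*} [NontriviallyNormedField 𝕜] [CompleteSpace 𝕜]
    {X E F : Type*} [TopologicalSpace X] [NormedAddCommGroup E] [NormedSpace 𝕜 E]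
    [FiniteDimensional 𝕜 E] [NormedAddCommGroup F] [NormedSpace 𝕜 F]
    {f : X → E →ₗ[𝕜] F} (hf : Continuous fun p : X × E => f p.1 p.2) :
    Continuous fun x => LinearMap.toContinuousLinearMap (f x) :=
  continuous_clm_apply.2 fun v => hf.comp (.prodMk_left v)

theorem trace_comp_integral_comp {X : Type*} [MeasurableSpace X] {μ : Measure X}
    {E : Type*} [NormedAddCommGroup E] [NormedSpace ℂ E] [FiniteDimensional ℂ E]
    {F : X → E →L[ℂ] E} (hF : Integrable F μ) (P Q : E →ₗ[ℂ] E) :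
    LinearMap.trace ℂ E (P ∘ₗ (∫ x, F x ∂μ : E →L[ℂ] E) ∘ₗ Q)
      = ∫ x, LinearMap.trace ℂ E (P ∘ₗ (F x : E →ₗ[ℂ] E) ∘ₗ Q) ∂μ := by
  let Φ : (E →L[ℂ] E) →L[ℂ] ℂ := LinearMap.toContinuousLinearMap
    (LinearMap.trace ℂ E ∘ₗ LinearMap.mulLeft ℂ P ∘ₗ LinearMap.mulRight ℂ Q ∘ₗ
      ContinuousLinearMap.coeLM ℂ)
  exact (Φ.integral_comp_comm hF).symm

noncomputable def conjAverage {G : Type*} [Group G] [MeasurableSpace G] (μ : Measure G)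
    {A : Type*} [NormedRing A] [NormedSpace ℝ A] (ρ : G →* A) (X : A) : A :=
  ∫ g, ρ g * X * ρ g⁻¹ ∂μ

section ConjAverage

variable {G : Type*} [Group G] [TopologicalSpace G] [IsTopologicalGroup G] [CompactSpace G]
  [MeasurableSpace G] [BorelSpace G] {μ : Measure G}

theorem integrable_conj [IsFiniteMeasure μ] {A : Type*} [NormedRing A] {ρ : G →* A}
    (hρ : Continuous ρ) (X : A) :
    Integrable (fun g => ρ g * X * ρ g⁻¹) μ :=
  (by fun_prop : Continuous fun g => ρ g * X * ρ g⁻¹).integrable_of_hasCompactSupport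
    (HasCompactSupport.of_compactSpace _)

theorem commute_conjAverage [IsFiniteMeasure μ] [μ.IsMulLeftInvariant] {A : Type*} [NormedRing A]
    [NormedSpace ℝ A] [IsScalarTower ℝ A A] [SMulCommClass ℝ A A] {ρ : G →* A}
    (hρ : Continuous ρ) (X : A) (h : G) : Commute (ρ h) (conjAverage μ ρ X) := by
  have hint := integrable_conj (μ := μ) hρ X
  have hinv : ρ h⁻¹ * ρ h = 1 := by rw [← map_mul, inv_mul_cancel, map_one]
  have hshift : ∀ g, ρ h * (ρ g * X * ρ g⁻¹) = ρ (h * g) * X * ρ (h * g)⁻¹ * ρ h := fun g => by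
    simp only [mul_inv_rev, map_mul, mul_assoc, hinv, mul_one]
  calc ρ h * conjAverage μ ρ X = ∫ g, ρ (h * g) * X * ρ (h * g)⁻¹ * ρ h ∂μ := by
        simp only [conjAverage, ← integral_const_mul_of_integrable hint, hshift]
    _ = ∫ g, ρ g * X * ρ g⁻¹ * ρ h ∂μ :=
        integral_mul_left_eq_self (fun g => ρ g * X * ρ g⁻¹ * ρ h) h
    _ = conjAverage μ ρ X * ρ h := integral_mul_const_of_integrable hint

theorem trace_conjAverage [IsProbabilityMeasure μ] {E : Type*} [NormedAddCommGroup E]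
    [NormedSpace ℂ E] [FiniteDimensional ℂ E] {ρ : G →* (E →L[ℂ] E)} (hρ : Continuous ρ)
    (X : E →L[ℂ] E) :
    LinearMap.trace ℂ E ((conjAverage μ ρ X : E →L[ℂ] E) : E →ₗ[ℂ] E) = LinearMap.trace ℂ E X := by
  have hconj : ∀ g, LinearMap.trace ℂ E (ρ g * X * ρ g⁻¹ : E →L[ℂ] E) = LinearMap.trace ℂ E X :=
    fun g => by
      rw [ContinuousLinearMap.toLinearMap_mul, LinearMap.trace_mul_comm,
        ← ContinuousLinearMap.toLinearMap_mul, ← mul_assoc, ← map_mul, inv_mul_cancel, map_one,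
        one_mul]
  calc LinearMap.trace ℂ E ((conjAverage μ ρ X : E →L[ℂ] E) : E →ₗ[ℂ] E)
      = ∫ g, LinearMap.trace ℂ E (ρ g * X * ρ g⁻¹ : E →L[ℂ] E) ∂μ := by
        simpa only [conjAverage, LinearMap.id_comp, LinearMap.comp_id] using
          trace_comp_integral_comp (integrable_conj hρ X) LinearMap.id LinearMap.id
    _ = LinearMap.trace ℂ E X := by simp only [hconj, integral_const, probReal_univ, one_smul]

end ConjAverage

namespace IsIrreducibleRep

variable {G V : Type*} [Group G] [AddCommGroup V] [Module ℂ V] [FiniteDimensional ℂ V]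
  {π : G →* (V →ₗ[ℂ] V)} {M : Module.End ℂ V}

theorem exists_eq_smul_one_of_commute [Nontrivial V] (hirr : IsIrreducibleRep π)
    (hM : ∀ g, Commute (π g) M) : ∃ c : ℂ, M = c • 1 := by
  obtain ⟨c, hc⟩ := M.exists_eigenvalue
  have hinv : ∀ g, (M.eigenspace c).map (π g) ≤ M.eigenspace c := fun g =>
    Submodule.map_le_iff_le_comap.2 (Module.End.mapsTo_genEigenspace_of_comm (hM g).symm c 1)
  have htop : M.eigenspace c = ⊤ := (hirr _ hinv).resolve_left hc
  exact ⟨c, LinearMap.ext fun v => Module.End.mem_eigenspace_iff.1 (htop ▸ Submodule.mem_top)⟩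

theorem eq_trace_div_finrank_smul_one_of_commute (hirr : IsIrreducibleRep π)
    (hM : ∀ g, Commute (π g) M) : M = (LinearMap.trace ℂ V M / Module.finrank ℂ V) • 1 := by
  rcases subsingleton_or_nontrivial V with hV | hV
  · exact Subsingleton.elim _ _
  obtain ⟨c, rfl⟩ := hirr.exists_eq_smul_one_of_commute hM
  have hn : (Module.finrank ℂ V : ℂ) ≠ 0 := Nat.cast_ne_zero.2 Module.finrank_pos.ne'
  rw [map_smul, Module.End.one_eq_id, LinearMap.trace_id, smul_eq_mul, mul_div_cancel_right₀ _ hn]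

end IsIrreducibleRep

theorem twisted_fusion_general
    {G : Type*} [Group G] [TopologicalSpace G] [IsTopologicalGroup G]
    [CompactSpace G] [MeasurableSpace G] [BorelSpace G]
    (μ : Measure G) [μ.IsHaarMeasure] [IsProbabilityMeasure μ]
    {V : Type*} [NormedAddCommGroup V] [InnerProductSpace ℂ V] [FiniteDimensional ℂ V]
    (π : G →* (V →ₗ[ℂ] V))
    (hrep : IsContUnitaryRep π) (hirr : IsIrreducibleRep π)
    (T : V →ₗ[ℂ] V) (A B : G) :
    ∫ g, LinearMap.trace ℂ V (π (A * g * B * g⁻¹) ∘ₗ T) ∂μ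
      = (1 / (Module.finrank ℂ V : ℂ)) * LinearMap.trace ℂ V (π B)
          * LinearMap.trace ℂ V (π A ∘ₗ T) := by
  -- Bochner integrals need a normed space of operators, so `π` is carried over to `V →L[ℂ] V`.
  let e := Module.End.toContinuousLinearMap V (𝕜 := ℂ)
  let ρ : G →* (V →L[ℂ] V) := (e : (V →ₗ[ℂ] V) →* (V →L[ℂ] V)).comp π
  have hρ : Continuous ρ := continuous_toContinuousLinearMap_of_continuous_uncurry hrep.1
  have hschur := hirr.eq_trace_div_finrank_smul_one_of_commute
    (M := ((conjAverage μ ρ (ρ B) : V →L[ℂ] V) : V →ₗ[ℂ] V))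
    fun g => (commute_conjAverage hρ (ρ B) g).map e.symm
  have hρ_coe : ∀ g, ((ρ g : V →L[ℂ] V) : V →ₗ[ℂ] V) = π g := fun _ => rfl
  calc ∫ g, LinearMap.trace ℂ V (π (A * g * B * g⁻¹) ∘ₗ T) ∂μ
      = ∫ g, LinearMap.trace ℂ V (π A ∘ₗ (ρ g * ρ B * ρ g⁻¹ : V →L[ℂ] V) ∘ₗ T) ∂μ := by
        simp only [ContinuousLinearMap.toLinearMap_mul, hρ_coe, map_mul, Module.End.mul_eq_comp,
          LinearMap.comp_assoc]
    _ = LinearMap.trace ℂ V (π A ∘ₗ (conjAverage μ ρ (ρ B) : V →L[ℂ] V) ∘ₗ T) :=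
        (trace_comp_integral_comp (integrable_conj hρ _) _ _).symm
    _ = (1 / (Module.finrank ℂ V : ℂ)) * LinearMap.trace ℂ V (π B)
          * LinearMap.trace ℂ V (π A ∘ₗ T) := by
        rw [hschur, trace_conjAverage hρ, hρ_coe, Module.End.one_eq_id, LinearMap.smul_comp,
          LinearMap.id_comp, LinearMap.comp_smul, map_smul, smul_eq_mul]
        ring

/-- Fusion relation with an arbitrary linear map inserted: for an irreducible unitary
representation `π` of a compact group and any linear `T : V → V`,
`∫ tr(π(A g B g⁻¹) ∘ T) dμ(g) = χ_π(B) tr(π(A) ∘ T) / dim π`.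
Specializing `T` to a twining intertwiner gives the fusion relation for twining
characters. -/
theorem twisted_fusion
    {G : Type*} [Group G] [TopologicalSpace G] [IsTopologicalGroup G]
    [CompactSpace G] [T2Space G] [MeasurableSpace G] [BorelSpace G]
    (μ : Measure G) [μ.IsHaarMeasure] [IsProbabilityMeasure μ]
    {V : Type*} [NormedAddCommGroup V] [InnerProductSpace ℂ V] [FiniteDimensional ℂ V]
    (π : G →* (V →ₗ[ℂ] V))
    (hrep : IsContUnitaryRep π) (hirr : IsIrreducibleRep π)
    (T : V →ₗ[ℂ] V) (A B : G) :
    ∫ g, LinearMap.trace ℂ V (π (A * g * B * g⁻¹) ∘ₗ T) ∂μ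
      = (1 / (Module.finrank ℂ V : ℂ)) * LinearMap.trace ℂ V (π B)
          * LinearMap.trace ℂ V (π A ∘ₗ T) :=
  twisted_fusion_general μ π hrep hirr T A B
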